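/- Let 0 < σ₁ < σ₂, N ≥ 2, and let f_j (j=1,2) be C² solutions of f_j'' + ((N-1)/r) f_j' - (1/σ_j) f_j = 0 on (0,∞). Suppose f₁(ρ) = f₂(ρ) and σ₁ f₁'(ρ) = σ₂ f₂'(ρ) < 0 for some ρ > 0. If there exists ℓ ∈ (ρ,∞) with f₁(ℓ) = f₂(ℓ) and f₁(r) < f₂(r) for all r ∈ (ρ,ℓ), then f₁'(ℓ) > 0 and f₂'(ℓ) > 0. -/

import Mathlib

/-!
For a solution of `f'' + ((N-1)/r) f' = f/σ` the flux `σ r^{N-1} f'` has derivative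
`r^{N-1} f`. Hence the difference of fluxes `W = σ₁ r^{N-1} f₁' - σ₂ r^{N-1} f₂'` satisfies
`W' = r^{N-1} (f₁ - f₂) < 0` on `(ρ, ℓ)`; as `W ρ = 0`, we get `σ₁ f₁'(ℓ) < σ₂ f₂'(ℓ)`.
Since `f₂ - f₁` is positive to the left of its zero `ℓ`, also `f₂'(ℓ) ≤ f₁'(ℓ)`, and these two
inequalities together with `σ₁ < σ₂` force both derivatives to be positive.
-/

open Set Filter Topology

noncomputable def radialFlux (σ : ℝ) (N : ℕ) (f : ℝ → ℝ) (r : ℝ) : ℝ :=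
  σ * (r ^ (N - 1) * deriv f r)

theorem hasDerivAt_radialFlux {σ : ℝ} (hσ : σ ≠ 0) {N : ℕ} (hN : 1 ≤ N) {f : ℝ → ℝ} {r : ℝ}
    (hr : r ≠ 0) (hf : DifferentiableAt ℝ (deriv f) r)
    (hode : deriv (deriv f) r + ((N : ℝ) - 1) / r * deriv f r - (1 / σ) * f r = 0) :
    HasDerivAt (radialFlux σ N f) (r ^ (N - 1) * f r) r := by
  obtain ⟨n, rfl⟩ : ∃ n, N = n + 1 := ⟨N - 1, by omega⟩
  rw [Nat.cast_succ, add_sub_cancel_right] at hode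
  have hpow : (n : ℝ) * r ^ (n - 1) * r = n * r ^ n := by
    cases n <;> simp [pow_succ, mul_assoc]
  unfold radialFlux
  rw [Nat.add_sub_cancel]
  refine (((hasDerivAt_pow n r).mul hf.hasDerivAt).const_mul σ).congr_deriv ?_
  field_simp at hode
  refine mul_right_cancel₀ hr ?_
  linear_combination r ^ n * hode + σ * deriv f r * hpow

theorem ContDiffOn.differentiableOn_deriv_two {𝕜 F : Type*} [NontriviallyNormedField 𝕜]
    [NormedAddCommGroup F] [NormedSpace 𝕜 F] {f : 𝕜 → F} {s : Set 𝕜}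
    (hf : ContDiffOn 𝕜 2 f s) (hs : IsOpen s) : DifferentiableOn 𝕜 (deriv f) s :=
  (hf.deriv_of_isOpen (m := 1) hs (by norm_num)).differentiableOn one_ne_zero

theorem strictAntiOn_radialFlux_sub {σ₁ σ₂ : ℝ} (hσ₁ : σ₁ ≠ 0) (hσ₂ : σ₂ ≠ 0) {N : ℕ}
    (hN : 1 ≤ N) {f₁ f₂ : ℝ → ℝ} {ρ ℓ : ℝ} (hρ : 0 < ρ)
    (hf₁ : ∀ r ∈ Icc ρ ℓ, DifferentiableAt ℝ (deriv f₁) r)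
    (hf₂ : ∀ r ∈ Icc ρ ℓ, DifferentiableAt ℝ (deriv f₂) r)
    (hode₁ : ∀ r ∈ Icc ρ ℓ,
      deriv (deriv f₁) r + ((N : ℝ) - 1) / r * deriv f₁ r - (1 / σ₁) * f₁ r = 0)
    (hode₂ : ∀ r ∈ Icc ρ ℓ,
      deriv (deriv f₂) r + ((N : ℝ) - 1) / r * deriv f₂ r - (1 / σ₂) * f₂ r = 0)
    (hlt : ∀ r ∈ Ioo ρ ℓ, f₁ r < f₂ r) :
    StrictAntiOn (radialFlux σ₁ N f₁ - radialFlux σ₂ N f₂) (Icc ρ ℓ) := by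
  have hW : ∀ r ∈ Icc ρ ℓ, HasDerivAt (radialFlux σ₁ N f₁ - radialFlux σ₂ N f₂)
      (r ^ (N - 1) * (f₁ r - f₂ r)) r := fun r hr => by
    have hr₀ : r ≠ 0 := (hρ.trans_le hr.1).ne'
    rw [mul_sub]
    exact (hasDerivAt_radialFlux hσ₁ hN hr₀ (hf₁ r hr) (hode₁ r hr)).sub
      (hasDerivAt_radialFlux hσ₂ hN hr₀ (hf₂ r hr) (hode₂ r hr))
  refine strictAntiOn_of_deriv_neg (convex_Icc ρ ℓ)
    (fun r hr => (hW r hr).continuousAt.continuousWithinAt) fun r hr => ?_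
  rw [interior_Icc] at hr
  rw [(hW r (Ioo_subset_Icc_self hr)).deriv]
  exact mul_neg_of_pos_of_neg (pow_pos (hρ.trans hr.1) _) (sub_neg.mpr (hlt r hr))

theorem HasDerivAt.le_of_lt_of_eq_left {f g : ℝ → ℝ} {f' g' a b : ℝ}
    (hf : HasDerivAt f f' b) (hg : HasDerivAt g g' b) (hab : a < b)
    (hlt : ∀ x ∈ Ioo a b, f x < g x) (heq : f b = g b) : g' ≤ f' := by
  have hslope : Tendsto (slope (fun x => g x - f x) b) (𝓝[<] b) (𝓝 (g' - f')) :=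
    ((hasDerivAt_iff_tendsto_slope.mp (hg.sub hf)).mono_left
      (nhdsWithin_mono b fun _ hx => ne_of_lt hx))
  have hnonpos : g' - f' ≤ 0 := by
    refine le_of_tendsto hslope ?_
    filter_upwards [Ioo_mem_nhdsLT hab] with x hx
    rw [slope_def_field, heq, sub_self, sub_zero]
    exact div_nonpos_of_nonneg_of_nonpos (sub_pos.mpr (hlt x hx)).le (sub_neg.mpr hx.2).le
  linarith

theorem stmt_6_general (σ₁ σ₂ : ℝ) (hσ₁ : 0 < σ₁) (hσ₁₂ : σ₁ < σ₂) (N : ℕ) (hN : 2 ≤ N)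
    (f₁ f₂ : ℝ → ℝ)
    (hreg₁ : ContDiffOn ℝ 2 f₁ (Set.Ioi 0)) (hreg₂ : ContDiffOn ℝ 2 f₂ (Set.Ioi 0))
    (hode₁ : ∀ r ∈ Set.Ioi (0 : ℝ),
      deriv (deriv f₁) r + ((N : ℝ) - 1) / r * deriv f₁ r - (1 / σ₁) * f₁ r = 0)
    (hode₂ : ∀ r ∈ Set.Ioi (0 : ℝ),
      deriv (deriv f₂) r + ((N : ℝ) - 1) / r * deriv f₂ r - (1 / σ₂) * f₂ r = 0)
    (ρ : ℝ) (hρ : 0 < ρ)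
    (hder : σ₁ * deriv f₁ ρ = σ₂ * deriv f₂ ρ)
    (ℓ : ℝ) (hℓ : ρ < ℓ)
    (hvl : f₁ ℓ = f₂ ℓ) (hlt : ∀ r ∈ Set.Ioo ρ ℓ, f₁ r < f₂ r) :
    0 < deriv f₁ ℓ ∧ 0 < deriv f₂ ℓ := by
  have hℓ₀ : 0 < ℓ := hρ.trans hℓ
  have hpos : Icc ρ ℓ ⊆ Ioi 0 := fun r hr => hρ.trans_le hr.1
  have hnhds : ∀ r ∈ Icc ρ ℓ, Ioi (0 : ℝ) ∈ 𝓝 r := fun r hr => isOpen_Ioi.mem_nhds (hpos hr)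
  have hW := strictAntiOn_radialFlux_sub hσ₁.ne' (hσ₁.trans hσ₁₂).ne' (by omega) hρ
    (fun r hr => (hreg₁.differentiableOn_deriv_two isOpen_Ioi).differentiableAt (hnhds r hr))
    (fun r hr => (hreg₂.differentiableOn_deriv_two isOpen_Ioi).differentiableAt (hnhds r hr))
    (fun r hr => hode₁ r (hpos hr)) (fun r hr => hode₂ r (hpos hr)) hlt
    (left_mem_Icc.mpr hℓ.le) (right_mem_Icc.mpr hℓ.le) hℓ
  have hflux : σ₁ * deriv f₁ ℓ < σ₂ * deriv f₂ ℓ := by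
    simp only [Pi.sub_apply, radialFlux, mul_left_comm σ₁, mul_left_comm σ₂, hder, sub_self] at hW
    nlinarith [pow_pos hℓ₀ (N - 1)]
  have hslope : deriv f₂ ℓ ≤ deriv f₁ ℓ := by
    have hdiff := fun {f : ℝ → ℝ} (hf : ContDiffOn ℝ 2 f (Ioi 0)) =>
      ((hf.differentiableOn two_ne_zero).differentiableAt (isOpen_Ioi.mem_nhds hℓ₀)).hasDerivAt
    exact (hdiff hreg₁).le_of_lt_of_eq_left (hdiff hreg₂) hℓ hlt hvl
  constructor <;> nlinarith

theorem stmt_6 (σ₁ σ₂ : ℝ) (hσ₁ : 0 < σ₁) (hσ₁₂ : σ₁ < σ₂) (N : ℕ) (hN : 2 ≤ N)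
    (f₁ f₂ : ℝ → ℝ)
    (hreg₁ : ContDiffOn ℝ 2 f₁ (Set.Ioi 0)) (hreg₂ : ContDiffOn ℝ 2 f₂ (Set.Ioi 0))
    (hode₁ : ∀ r ∈ Set.Ioi (0 : ℝ),
      deriv (deriv f₁) r + ((N : ℝ) - 1) / r * deriv f₁ r - (1 / σ₁) * f₁ r = 0)
    (hode₂ : ∀ r ∈ Set.Ioi (0 : ℝ),
      deriv (deriv f₂) r + ((N : ℝ) - 1) / r * deriv f₂ r - (1 / σ₂) * f₂ r = 0)
    (ρ : ℝ) (hρ : 0 < ρ)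
    (hval : f₁ ρ = f₂ ρ)
    (hder : σ₁ * deriv f₁ ρ = σ₂ * deriv f₂ ρ) (hneg : σ₂ * deriv f₂ ρ < 0)
    (ℓ : ℝ) (hℓ : ρ < ℓ)
    (hvl : f₁ ℓ = f₂ ℓ) (hlt : ∀ r ∈ Set.Ioo ρ ℓ, f₁ r < f₂ r) :
    0 < deriv f₁ ℓ ∧ 0 < deriv f₂ ℓ :=
  stmt_6_general σ₁ σ₂ hσ₁ hσ₁₂ N hN f₁ f₂ hreg₁ hreg₂ hode₁ hode₂ ρ hρ hder ℓ hℓ hvl hlt
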